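/- Let Ũ = ℂ \ (-∞,0] with hyperbolic density ρ_{Ũ}(w) = 1/(2|w| cos(Arg(w)/2)) (Arg the principal argument). If ζ ∈ Ũ with exp(ζ) ∈ Ũ and Re ζ ≥ 2, then |exp(ζ)| · ρ_{Ũ}(exp(ζ))/ρ_{Ũ}(ζ) ≥ √2. -/

import Mathlib

/-! Both densities are explicit, so the expansion factor of `exp` is `|ζ| cos(Arg ζ / 2)` divided by
`cos(Arg e^ζ / 2) ∈ (0, 1]`. For `Re ζ ≥ 2` we have `|ζ| ≥ 2` and `|Arg ζ| ≤ π/2`, whence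
`|ζ| cos(Arg ζ / 2) ≥ 2 cos(π/4) = √2`. -/

open Real

/-- Density of the hyperbolic metric of the negatively slit plane `ℂ \ (-∞,0]`. -/
noncomputable def rhoUt (w : ℂ) : ℝ := 1 / (2 * ‖w‖ * Real.cos (Complex.arg w / 2))

namespace Complex

lemma cos_half_arg_nonneg (z : ℂ) : 0 ≤ Real.cos (arg z / 2) :=
  Real.cos_nonneg_of_mem_Icc ⟨by linarith [neg_pi_lt_arg z], by linarith [arg_le_pi z]⟩

lemma cos_half_arg_pos {z : ℂ} (hz : z ∈ slitPlane) : 0 < Real.cos (arg z / 2) := by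
  have harg : arg z ≠ π := (mem_slitPlane_iff_arg.1 hz).1
  have hlt : arg z < π := lt_of_le_of_ne (arg_le_pi z) harg
  exact Real.cos_pos_of_mem_Ioo ⟨by linarith [neg_pi_lt_arg z], by linarith⟩

lemma sqrt_two_div_two_le_cos_half_arg {z : ℂ} (hz : 0 ≤ z.re) :
    √2 / 2 ≤ Real.cos (arg z / 2) := by
  have harg : |arg z / 2| ≤ π / 4 := by
    rw [abs_div, abs_two]
    linarith [abs_arg_le_pi_div_two_iff.2 hz]
  calc √2 / 2 = Real.cos (π / 4) := cos_pi_div_four.symm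
    _ ≤ Real.cos |arg z / 2| :=
        Real.cos_le_cos_of_nonneg_of_le_pi (abs_nonneg _) (by linarith [pi_pos]) harg
    _ = Real.cos (arg z / 2) := Real.cos_abs _

end Complex

open Complex

lemma norm_mul_rhoUt_div_rhoUt {w : ℂ} (hw : w ≠ 0) (z : ℂ) :
    ‖w‖ * (rhoUt w / rhoUt z) = ‖z‖ * Real.cos (arg z / 2) / Real.cos (arg w / 2) := by
  have hw' : ‖w‖ ≠ 0 := norm_ne_zero_iff.2 hw
  simp only [rhoUt, one_div, mul_inv]
  field_simp

lemma norm_mul_cos_half_arg_le_expansion_exp {ζ : ℂ} (hexp : exp ζ ∈ slitPlane) :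
    ‖ζ‖ * Real.cos (arg ζ / 2) ≤ ‖exp ζ‖ * (rhoUt (exp ζ) / rhoUt ζ) := by
  rw [norm_mul_rhoUt_div_rhoUt (exp_ne_zero ζ)]
  exact le_div_self (by positivity [cos_half_arg_nonneg ζ]) (cos_half_arg_pos hexp)
    (Real.cos_le_one _)

theorem exp_strongly_expands_negatively_slit_plane_general (ζ : ℂ)
    (hexp : (Complex.exp ζ).im ≠ 0 ∨ 0 < (Complex.exp ζ).re)
    (hre : 2 ≤ ζ.re) :
    Real.sqrt 2 ≤ ‖Complex.exp ζ‖ * (rhoUt (Complex.exp ζ) / rhoUt ζ) := by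
  have hnorm : 2 ≤ ‖ζ‖ := hre.trans (re_le_norm ζ)
  have hcos := sqrt_two_div_two_le_cos_half_arg (z := ζ) (by linarith)
  calc √2 = 2 * (√2 / 2) := by ring
    _ ≤ ‖ζ‖ * Real.cos (arg ζ / 2) := mul_le_mul hnorm hcos (by positivity) (by linarith)
    _ ≤ _ := norm_mul_cos_half_arg_le_expansion_exp (mem_slitPlane_iff.2 hexp.symm)

theorem exp_strongly_expands_negatively_slit_plane (ζ : ℂ)
    (hζ : ζ.im ≠ 0 ∨ 0 < ζ.re) (hexp : (Complex.exp ζ).im ≠ 0 ∨ 0 < (Complex.exp ζ).re)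
    (hre : 2 ≤ ζ.re) :
    Real.sqrt 2 ≤ ‖Complex.exp ζ‖ * (rhoUt (Complex.exp ζ) / rhoUt ζ) :=
  exp_strongly_expands_negatively_slit_plane_general ζ hexp hre
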